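/- Hashing formula for the sub-sampled function: let g : {0,1}^n → ℝ with Fourier transform ĝ, let σ ∈ {0,1}^{n×b} (viewed as a matrix over GF(2)), and define u_σ : {0,1}^b → ℝ by u_σ(x̃) = √(2^n/2^b) · g(σx̃), where σx̃ is matrix-vector multiplication mod 2. Then the Fourier transform of u_σ satisfies û_σ(f̃) = Σ_{f∈{0,1}^n : σᵀf = f̃} ĝ(f) for every f̃ ∈ {0,1}^b, where σᵀf is also taken mod 2. -/

import Mathlib

/-! Writing `(-1)^⟨f, x⟩ = χ(f ⬝ᵥ x)` for the character `χ` of `ZMod 2`, Fourier inversion expands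
`u_σ(x̃) = 2^{-b/2} ∑_f ĝ(f) χ(f ⬝ᵥ σ x̃) = 2^{-b/2} ∑_f ĝ(f) χ(σᵀ f ⬝ᵥ x̃)`.
By orthogonality of characters the Fourier coefficients of a function given as such an
expansion are read off by collecting the terms with the same frequency `σᵀ f`. -/

open Finset Matrix

/-- Integer inner product of Boolean vectors. -/
def bip {n : ℕ} (f x : Fin n → ZMod 2) : ℕ := ∑ i, (f i).val * (x i).val

/-- Walsh–Hadamard Fourier coefficient of `g : {0,1}^m → ℝ` at frequency `f`. -/
noncomputable def wcoef {m : ℕ} (g : (Fin m → ZMod 2) → ℝ) (f : Fin m → ZMod 2) : ℝ :=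
  (1 / Real.sqrt (2 ^ m)) * ∑ x : Fin m → ZMod 2, g x * (-1 : ℝ) ^ (bip f x)

noncomputable def chi (a : ZMod 2) : ℝ := (-1) ^ a.val

lemma chi_natCast (k : ℕ) : chi k = (-1) ^ k := by
  rw [chi, ZMod.val_natCast, ← neg_one_pow_eq_pow_mod_two]

lemma chi_sum {ι : Type*} (s : Finset ι) (a : ι → ZMod 2) :
    chi (∑ i ∈ s, a i) = ∏ i ∈ s, chi (a i) := by
  have : ∑ i ∈ s, a i = ((∑ i ∈ s, (a i).val : ℕ) : ZMod 2) := by simp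
  rw [this, chi_natCast, ← prod_pow_eq_pow_sum]
  rfl

lemma chi_add (a c : ZMod 2) : chi (a + c) = chi a * chi c := by
  rw [← ZMod.natCast_zmod_val a, ← ZMod.natCast_zmod_val c, ← Nat.cast_add, chi_natCast,
    chi_natCast, chi_natCast, pow_add]

lemma chi_sub (a c : ZMod 2) : chi (a - c) = chi a * chi c := by
  rw [sub_eq_add_neg, ZMod.neg_eq_self_mod_two, chi_add]

lemma neg_one_pow_bip {m : ℕ} (f x : Fin m → ZMod 2) : (-1 : ℝ) ^ bip f x = chi (f ⬝ᵥ x) := by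
  rw [← chi_natCast]
  congr 1
  simp [bip, dotProduct]

lemma wcoef_eq_sum_chi {m : ℕ} (g : (Fin m → ZMod 2) → ℝ) (f : Fin m → ZMod 2) :
    wcoef g f = (1 / Real.sqrt (2 ^ m)) * ∑ x, g x * chi (f ⬝ᵥ x) := by
  simp only [wcoef, neg_one_pow_bip]

lemma sum_chi_mul (a : ZMod 2) : ∑ t, chi (a * t) = if a = 0 then 2 else 0 := by
  have huniv : (univ : Finset (ZMod 2)) = {0, 1} := rfl
  obtain rfl | rfl : a = 0 ∨ a = 1 := by decide +revert
  · simp [huniv, chi]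
  · simp [huniv, chi, ZMod.val_one]

lemma sum_chi_dotProduct {m : ℕ} (v : Fin m → ZMod 2) :
    ∑ x, chi (v ⬝ᵥ x) = if v = 0 then 2 ^ m else 0 := by
  simp_rw [dotProduct, chi_sum]
  rw [← Fintype.prod_sum (fun i t => chi (v i * t))]
  simp_rw [sum_chi_mul, Fintype.prod_ite_zero, funext_iff]
  simp

lemma sum_chi_dotProduct_mul_chi_dotProduct {m : ℕ} (v w : Fin m → ZMod 2) :
    ∑ x, chi (v ⬝ᵥ x) * chi (w ⬝ᵥ x) = if v = w then 2 ^ m else 0 := by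
  simp_rw [← chi_sub, ← sub_dotProduct, sum_chi_dotProduct, sub_eq_zero]

theorem sum_wcoef_mul_chi {m : ℕ} (g : (Fin m → ZMod 2) → ℝ) (y : Fin m → ZMod 2) :
    ∑ f, wcoef g f * chi (f ⬝ᵥ y) = Real.sqrt (2 ^ m) * g y := by
  have hs : Real.sqrt (2 ^ m) ^ 2 = 2 ^ m := Real.sq_sqrt (by positivity)
  calc ∑ f, wcoef g f * chi (f ⬝ᵥ y)
      = 1 / Real.sqrt (2 ^ m) * ∑ x, g x * ∑ f, chi (x ⬝ᵥ f) * chi (y ⬝ᵥ f) := by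
        simp only [wcoef_eq_sum_chi, mul_sum, sum_mul]
        rw [sum_comm]
        exact sum_congr rfl fun x _ => sum_congr rfl fun f _ => by
          rw [dotProduct_comm x, dotProduct_comm y]
          ring
    _ = 1 / Real.sqrt (2 ^ m) * (g y * 2 ^ m) := by
        simp [sum_chi_dotProduct_mul_chi_dotProduct]
    _ = Real.sqrt (2 ^ m) * g y := by
        field_simp
        rw [hs]

theorem wcoef_eq_sum_filter_of_eq_sum_chi {ι : Type*} [Fintype ι] {m : ℕ}
    (u : (Fin m → ZMod 2) → ℝ) (c : ι → ℝ) (φ : ι → Fin m → ZMod 2)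
    (hu : ∀ x, u x = 1 / Real.sqrt (2 ^ m) * ∑ i, c i * chi (φ i ⬝ᵥ x)) (ft : Fin m → ZMod 2) :
    wcoef u ft = ∑ i ∈ univ.filter (fun i => φ i = ft), c i := by
  have hs : Real.sqrt (2 ^ m) ^ 2 = 2 ^ m := Real.sq_sqrt (by positivity)
  calc wcoef u ft
      = 1 / Real.sqrt (2 ^ m) ^ 2 * ∑ i, c i * ∑ x, chi (φ i ⬝ᵥ x) * chi (ft ⬝ᵥ x) := by
        simp only [wcoef_eq_sum_chi, hu, mul_sum, sum_mul]
        rw [sum_comm]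
        exact sum_congr rfl fun _ _ => sum_congr rfl fun _ _ => by ring
    _ = ∑ i ∈ univ.filter (fun i => φ i = ft), c i := by
        simp_rw [sum_chi_dotProduct_mul_chi_dotProduct, hs, sum_filter, mul_sum]
        refine sum_congr rfl fun i _ => ?_
        split_ifs
        · field_simp
        · simp

/-- Hashing formula: the Fourier coefficient of the sub-sampled function
`u_σ(x̃) = √(2^n/2^b) · g(σ x̃)` at `f̃` is the sum of the Fourier coefficients
of `g` over all frequencies `f` hashed to the bucket `f̃`, i.e. with `σᵀ f = f̃`. -/
theorem hashing_formula (n b : ℕ) (g : (Fin n → ZMod 2) → ℝ)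
    (σ : Matrix (Fin n) (Fin b) (ZMod 2))
    (u : (Fin b → ZMod 2) → ℝ)
    (hu : ∀ xt : Fin b → ZMod 2,
      u xt = Real.sqrt ((2 : ℝ) ^ n / (2 : ℝ) ^ b) * g (σ.mulVec xt)) :
    ∀ ft : Fin b → ZMod 2,
      wcoef u ft =
        ∑ f ∈ Finset.univ.filter (fun f : Fin n → ZMod 2 => σᵀ.mulVec f = ft),
          wcoef g f := by
  refine wcoef_eq_sum_filter_of_eq_sum_chi u (wcoef g) (σᵀ *ᵥ ·) fun xt => ?_
  have hswap (f : Fin n → ZMod 2) : σᵀ *ᵥ f ⬝ᵥ xt = f ⬝ᵥ σ *ᵥ xt := by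
    rw [dotProduct_mulVec, mulVec_transpose]
  simp_rw [hu, hswap, sum_wcoef_mul_chi, Real.sqrt_div' _ (by positivity : (0 : ℝ) ≤ 2 ^ b)]
  ring
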